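/- arXiv:1608.03696 — 3 statements merged into one kernel-verified Lean document; each statement's English description precedes it below -/
import Mathlib

section
/- Let 0 < s ≤ 1 and assume the detailed balance condition π_i a_{ij} = π_j a_{ji} for all i ≠ j. Then for every z ∈ ℝ^n and every u ∈ (0,∞)^n, zᵀ H(u) A(u) z ≥ s Σ_{i=1}^n π_i u_i^{s-2} ( a_{i0} + (s+1) a_{ii} u_i^s ) z_i² + (s²/2) Σ_{i,j=1, i≠j}^n π_i a_{ij} (u_i u_j)^{s-1} ( √(u_j/u_i) z_i + √(u_i/u_j) z_j )². -/
open Finset Real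

noncomputable section

/-- The diffusion matrix `A(u)`: `A_{ij}(u) = δ_{ij}(a_{i0} + Σ_k a_{ik} u_k^s) + s a_{ij} u_i u_j^{s-1}`. -/
def matA (n : ℕ) (s : ℝ) (a0 : Fin n → ℝ) (a : Fin n → Fin n → ℝ) (u : Fin n → ℝ) :
    Matrix (Fin n) (Fin n) ℝ :=
  Matrix.of fun i j =>
    (if i = j then a0 i + ∑ k, a i k * u k ^ s else 0) + s * a i j * u i * u j ^ (s - 1)

/-- The entropy Hessian `H(u)`: `H_{ij}(u) = δ_{ij} s π_i u_i^{s-2}`. -/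
def matH (n : ℕ) (s : ℝ) (P : Fin n → ℝ) (u : Fin n → ℝ) : Matrix (Fin n) (Fin n) ℝ :=
  Matrix.of fun i j => if i = j then s * P i * u i ^ (s - 2) else 0

/-- The quadratic form `zᵀ M z`. -/
def quad (n : ℕ) (M : Matrix (Fin n) (Fin n) ℝ) (z : Fin n → ℝ) : ℝ :=
  ∑ i, ∑ j, z i * M i j * z j

/-! Since `H(u)` is diagonal, `zᵀ H(u) A(u) z` is `s` times the first sum on the right plus
`s C + s² M`, where `w_ij = π_i a_ij (u_i u_j)^(s-1)`, `C = Σ_{i≠j} w_ij (u_j/u_i) z_i²` and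
`M = Σ_{i≠j} w_ij z_i z_j`. Detailed balance makes `w` symmetric, so expanding the squares and
swapping `i` and `j` in one of the two square terms shows that the second sum on the right is
`s² (C + M)`. The difference is `(s - s²) C ≥ 0`. -/

section OffDiagonal

variable {ι : Type*} [Fintype ι] [DecidableEq ι]

lemma sum_sum_eq_sum_add_sum_sum_erase {M : Type*} [AddCommMonoid M] (f : ι → ι → M) :
    ∑ i, ∑ j, f i j = ∑ i, f i i + ∑ i, ∑ j ∈ univ.erase i, f i j := by
  rw [← sum_add_distrib]
  exact sum_congr rfl fun i _ => (add_sum_erase _ _ (mem_univ i)).symm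

lemma sum_sum_erase_comm {M : Type*} [AddCommMonoid M] (f : ι → ι → M) :
    ∑ i, ∑ j ∈ univ.erase i, f j i = ∑ i, ∑ j ∈ univ.erase i, f i j := by
  simp_rw [← filter_ne', sum_filter]
  rw [sum_comm]
  exact sum_congr rfl fun i _ => sum_congr rfl fun j _ => by simp [ne_comm]

lemma sq_sqrt_div_mul_add_sqrt_div_mul {p q : ℝ} (hp : 0 < p) (hq : 0 < q) (x y : ℝ) :
    (√(q / p) * x + √(p / q) * y) ^ 2 = q / p * x ^ 2 + p / q * y ^ 2 + 2 * (x * y) := by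
  have hsqrt : √(q / p) * √(p / q) = 1 := by
    rw [← Real.sqrt_mul (div_nonneg hq.le hp.le), div_mul_div_comm, mul_comm q p,
      div_self (by positivity), Real.sqrt_one]
  linear_combination x ^ 2 * Real.sq_sqrt (div_nonneg hq.le hp.le)
    + y ^ 2 * Real.sq_sqrt (div_nonneg hp.le hq.le) + 2 * x * y * hsqrt

lemma sum_sum_erase_mul_sq_sqrt_div {w : ι → ι → ℝ} (hw : ∀ i j, i ≠ j → w i j = w j i)
    {r : ι → ℝ} (hr : ∀ i, 0 < r i) (x : ι → ℝ) :
    ∑ i, ∑ j ∈ univ.erase i, w i j * (√(r j / r i) * x i + √(r i / r j) * x j) ^ 2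
      = 2 * ∑ i, ∑ j ∈ univ.erase i, w i j * (r j / r i * x i ^ 2)
        + 2 * ∑ i, ∑ j ∈ univ.erase i, w i j * (x i * x j) := by
  have hswap : ∑ i, ∑ j ∈ univ.erase i, w i j * (r i / r j * x j ^ 2)
      = ∑ i, ∑ j ∈ univ.erase i, w i j * (r j / r i * x i ^ 2) := by
    rw [← sum_sum_erase_comm]
    exact sum_congr rfl fun i _ => sum_congr rfl fun j hj => by
      rw [hw j i (ne_of_mem_erase hj)]
  simp only [sq_sqrt_div_mul_add_sqrt_div_mul (hr _) (hr _), mul_add, sum_add_distrib]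
  rw [hswap]
  simp only [mul_left_comm _ (2 : ℝ), ← mul_sum]
  ring

end OffDiagonal

lemma matH_eq_diagonal (n : ℕ) (s : ℝ) (P u : Fin n → ℝ) :
    matH n s P u = Matrix.diagonal fun i => s * P i * u i ^ (s - 2) := by
  ext i j
  simp [matH, Matrix.diagonal_apply]

lemma quad_matH_mul_matA_eq_sum (n : ℕ) (s : ℝ) (a0 : Fin n → ℝ) (a : Fin n → Fin n → ℝ)
    (P u z : Fin n → ℝ) :
    quad n (matH n s P u * matA n s a0 a u) z
      = ∑ i, s * P i * u i ^ (s - 2) * a0 i * z i ^ 2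
        + ∑ i, ∑ j, (s * P i * a i j * u i ^ (s - 2) * u j ^ s * z i ^ 2
          + s ^ 2 * P i * a i j * (u i ^ (s - 2) * u i) * u j ^ (s - 1) * (z i * z j)) := by
  simp only [quad, matH_eq_diagonal, Matrix.diagonal_mul, matA, Matrix.of_apply, mul_add,
    add_mul, sum_add_distrib, mul_ite, ite_mul, mul_zero, zero_mul, sum_ite_eq, mem_univ, if_true,
    mul_sum, sum_mul]
  rw [add_assoc]
  congr 1
  · exact sum_congr rfl fun i _ => by ring
  congr 1 <;> exact sum_congr rfl fun i _ => sum_congr rfl fun j _ => by ring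

lemma quad_matH_mul_matA_eq_diag_add_offDiag (n : ℕ) (s : ℝ) (a0 : Fin n → ℝ)
    (a : Fin n → Fin n → ℝ) (P z : Fin n → ℝ) {u : Fin n → ℝ} (hu : ∀ i, 0 < u i) :
    quad n (matH n s P u * matA n s a0 a u) z
      = s * ∑ i, P i * u i ^ (s - 2) * (a0 i + (s + 1) * a i i * u i ^ s) * z i ^ 2
        + (s * ∑ i, ∑ j ∈ univ.erase i,
            P i * a i j * (u i * u j) ^ (s - 1) * (u j / u i * z i ^ 2)
          + s ^ 2 * ∑ i, ∑ j ∈ univ.erase i, P i * a i j * (u i * u j) ^ (s - 1) * (z i * z j)) := by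
  have hpow2 (i : Fin n) : u i ^ (s - 2) = u i ^ s / u i ^ 2 := by
    rw [Real.rpow_sub (hu i), Real.rpow_two]
  have hpow1 (i : Fin n) : u i ^ (s - 1) = u i ^ s / u i := Real.rpow_sub_one (hu i).ne' s
  rw [quad_matH_mul_matA_eq_sum, sum_sum_eq_sum_add_sum_sum_erase]
  simp only [mul_sum, ← sum_add_distrib]
  refine sum_congr rfl fun i _ => ?_
  have hui := (hu i).ne'
  rw [← add_assoc]
  congr 1
  · rw [hpow2, hpow1]
    field_simp
    ring
  refine sum_congr rfl fun j _ => ?_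
  have huj := (hu j).ne'
  rw [Real.mul_rpow (hu i).le (hu j).le, hpow2, hpow1, hpow1]
  field_simp

theorem stmt2_general (n : ℕ) (s : ℝ) (hs : 0 < s) (hs1 : s ≤ 1)
    (a0 : Fin n → ℝ) (a : Fin n → Fin n → ℝ) (P : Fin n → ℝ)
    (ha : ∀ i j, 0 ≤ a i j) (hP : ∀ i, 0 < P i)
    (hdb : ∀ i j, i ≠ j → P i * a i j = P j * a j i)
    (z u : Fin n → ℝ) (hu : ∀ i, 0 < u i) :
    s * ∑ i, P i * u i ^ (s - 2) * (a0 i + (s + 1) * a i i * u i ^ s) * z i ^ 2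
      + s ^ 2 / 2 * ∑ i, ∑ j ∈ Finset.univ.erase i,
          P i * a i j * (u i * u j) ^ (s - 1)
            * (Real.sqrt (u j / u i) * z i + Real.sqrt (u i / u j) * z j) ^ 2
    ≤ quad n (matH n s P u * matA n s a0 a u) z := by
  have hsymm (i j : Fin n) (hij : i ≠ j) :
      P i * a i j * (u i * u j) ^ (s - 1) = P j * a j i * (u j * u i) ^ (s - 1) := by
    rw [hdb i j hij, mul_comm (u i)]
  have hcross : 0 ≤ ∑ i, ∑ j ∈ univ.erase i,
      P i * a i j * (u i * u j) ^ (s - 1) * (u j / u i * z i ^ 2) :=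
    sum_nonneg fun i _ => sum_nonneg fun j _ => by
      have := ha i j; have := hP i; have := hu i; have := hu j
      positivity
  rw [quad_matH_mul_matA_eq_diag_add_offDiag _ _ _ _ _ _ hu,
    sum_sum_erase_mul_sq_sqrt_div (w := fun i j => P i * a i j * (u i * u j) ^ (s - 1)) hsymm hu]
  linear_combination mul_nonneg (mul_nonneg hs.le (sub_nonneg.2 hs1)) hcross

theorem stmt2 (n : ℕ) (hn : 1 ≤ n) (s : ℝ) (hs : 0 < s) (hs1 : s ≤ 1)
    (a0 : Fin n → ℝ) (a : Fin n → Fin n → ℝ) (P : Fin n → ℝ)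
    (ha0 : ∀ i, 0 ≤ a0 i) (ha : ∀ i j, 0 ≤ a i j) (hP : ∀ i, 0 < P i)
    (hdb : ∀ i j, i ≠ j → P i * a i j = P j * a j i)
    (z u : Fin n → ℝ) (hu : ∀ i, 0 < u i) :
    s * ∑ i, P i * u i ^ (s - 2) * (a0 i + (s + 1) * a i i * u i ^ s) * z i ^ 2
      + s ^ 2 / 2 * ∑ i, ∑ j ∈ Finset.univ.erase i,
          P i * a i j * (u i * u j) ^ (s - 1)
            * (Real.sqrt (u j / u i) * z i + Real.sqrt (u i / u j) * z j) ^ 2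
    ≤ quad n (matH n s P u * matA n s a0 a u) z :=
  stmt2_general n s hs hs1 a0 a P ha hP hdb z u hu
end
end

section
/- Let s > 1 and take π_i = 1 for all i. If η₂ := min_{i=1,…,n} ( a_{ii} − (1/(2(s+1))) Σ_{j=1, j≠i}^n ( s(a_{ij} + a_{ji}) − 2√(a_{ij} a_{ji}) ) ) > 0, then for every z ∈ ℝ^n and every u ∈ (0,∞)^n, zᵀ H(u) A(u) z ≥ s Σ_{i=1}^n a_{i0} u_i^{s-2} z_i² + η₂ s(s+1) Σ_{i=1}^n u_i^{2(s-1)} z_i². -/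
/-!
With `X_i = u_i^{s-1} z_i` and `v_i = u_i^s`, the form `zᵀ H A z` is
`s Σ_i a_{i0} u_i^{s-2} z_i² + Σ_{i,j} (s a_{ij} (v_j / v_i) X_i² + s² a_{ij} X_i X_j)`.
The terms `j = i` give `s(s+1) a_{ii} X_i²`. For `i ≠ j`, weighted AM–GM with weight `v_j / v_i`
bounds the two `v`-terms below by `2s √(a_{ij} a_{ji}) |X_i X_j|`, so the pair `{i, j}` loses at most
`(s/2)(s(a_{ij} + a_{ji}) - 2√(a_{ij} a_{ji}))(X_i² + X_j²)`. Charging each half to its row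
leaves `s(s+1) X_i²` times exactly the quantity minimised in `η₂`.
-/

open Finset Real

noncomputable section

theorem sum_sum_erase_nonneg_of_add_swap_nonneg {ι R : Type*} [Fintype ι] [DecidableEq ι]
    [AddCommGroup R] [LinearOrder R] [IsOrderedAddMonoid R] (G : ι → ι → R)
    (hG : ∀ i j, i ≠ j → 0 ≤ G i j + G j i) :
    0 ≤ ∑ i, ∑ j ∈ univ.erase i, G i j := by
  set G' : ι → ι → R := fun i j => if j ≠ i then G i j else 0
  have hsum : ∑ i, ∑ j ∈ univ.erase i, G i j = ∑ i, ∑ j, G' i j := by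
    simp only [G', ← sum_filter, filter_ne']
  have hswap : ∑ i, ∑ j, G' j i = ∑ i, ∑ j, G' i j := sum_comm
  have hpair : ∀ i j, 0 ≤ G' i j + G' j i := by
    intro i j
    by_cases hij : i = j
    · simp [G', hij]
    · simpa [G', hij, Ne.symm hij] using hG i j hij
  rw [hsum, ← nonneg_add_self_iff]
  nth_rewrite 2 [← hswap]
  rw [← sum_add_distrib]
  exact sum_nonneg fun i _ => by rw [← sum_add_distrib]; exact sum_nonneg fun j _ => hpair i j

theorem two_sqrt_mul_mul_abs_le {p q t : ℝ} (hp : 0 ≤ p) (hq : 0 ≤ q) (ht : 0 < t) (X Y : ℝ) :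
    2 * √(p * q) * |X * Y| ≤ p * t * X ^ 2 + q * t⁻¹ * Y ^ 2 := by
  have hpt : √(p * t) ^ 2 = p * t := sq_sqrt (by positivity)
  have hqt : √(q * t⁻¹) ^ 2 = q * t⁻¹ := sq_sqrt (by positivity)
  have hprod : √(p * t) * √(q * t⁻¹) = √(p * q) := by
    rw [← sqrt_mul (by positivity)]
    congr 1
    field_simp
  have hsq : (√(p * t) * |X| - √(q * t⁻¹) * |Y|) ^ 2
      = p * t * X ^ 2 + q * t⁻¹ * Y ^ 2 - 2 * √(p * q) * |X * Y| := by
    rw [abs_mul, ← hprod, ← sq_abs X, ← sq_abs Y]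
    linear_combination (|X| ^ 2) * hpt + (|Y| ^ 2) * hqt
  linarith [sq_nonneg (√(p * t) * |X| - √(q * t⁻¹) * |Y|)]

def pairDefect (s p q : ℝ) : ℝ := s * (p + q) - 2 * √(p * q)

theorem pairDefect_comm (s p q : ℝ) : pairDefect s q p = pairDefect s p q := by
  rw [pairDefect, pairDefect, add_comm q, mul_comm q]

theorem pairDefect_nonneg {s p q : ℝ} (hs : 1 ≤ s) (hp : 0 ≤ p) (hq : 0 ≤ q) :
    0 ≤ pairDefect s p q := by
  rw [pairDefect, sqrt_mul hp]
  nlinarith [sq_nonneg (√p - √q), sq_sqrt hp, sq_sqrt hq]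

theorem neg_pairDefect_mul_le {s p q t : ℝ} (hs : 1 ≤ s) (hp : 0 ≤ p) (hq : 0 ≤ q)
    (ht : 0 < t) (X Y : ℝ) :
    -(pairDefect s p q / 2 * (X ^ 2 + Y ^ 2))
      ≤ p * t * X ^ 2 + q * t⁻¹ * Y ^ 2 + s * (p + q) * (X * Y) := by
  have hamgm := two_sqrt_mul_mul_abs_le hp hq ht X Y
  have habs : 2 * |X * Y| ≤ X ^ 2 + Y ^ 2 := by
    rw [abs_mul]
    nlinarith [sq_nonneg (|X| - |Y|), sq_abs X, sq_abs Y]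
  have hdefect := mul_le_mul_of_nonneg_left habs (pairDefect_nonneg hs hp hq)
  have hcross : 0 ≤ s * (p + q) * (X * Y + |X * Y|) :=
    mul_nonneg (by nlinarith) (by linarith [neg_abs_le (X * Y)])
  rw [pairDefect] at hdefect ⊢
  linarith

section WeightedForm

variable {ι : Type*} [Fintype ι] [DecidableEq ι]

def rowMargin (s : ℝ) (a : ι → ι → ℝ) (i : ι) : ℝ :=
  a i i - 1 / (2 * (s + 1)) * ∑ j ∈ univ.erase i, pairDefect s (a i j) (a j i)

theorem sum_rowMargin_mul_sq_le {s : ℝ} (hs : 1 ≤ s) {a : ι → ι → ℝ} (ha : ∀ i j, 0 ≤ a i j)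
    {v : ι → ℝ} (hv : ∀ i, 0 < v i) (X : ι → ℝ) :
    ∑ i, s * (s + 1) * rowMargin s a i * X i ^ 2
      ≤ ∑ i, ∑ j, (s * a i j * (v j / v i) * X i ^ 2 + s ^ 2 * a i j * (X i * X j)) := by
  set G : ι → ι → ℝ := fun i j => s * a i j * (v j / v i) * X i ^ 2
    + s ^ 2 * a i j * (X i * X j) + s / 2 * pairDefect s (a i j) (a j i) * X i ^ 2
  have hrow : ∀ i, ∑ j, (s * a i j * (v j / v i) * X i ^ 2 + s ^ 2 * a i j * (X i * X j))
      - s * (s + 1) * rowMargin s a i * X i ^ 2 = ∑ j ∈ univ.erase i, G i j := by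
    intro i
    have hs1 : s + 1 ≠ 0 := by linarith
    rw [← add_sum_erase _ _ (mem_univ i), div_self (hv i).ne', rowMargin]
    simp only [G, sum_add_distrib, ← sum_mul, ← mul_sum]
    field_simp
    ring
  have hpair : ∀ i j, i ≠ j → 0 ≤ G i j + G j i := by
    intro i j _
    have h := neg_pairDefect_mul_le hs (ha i j) (ha j i) (div_pos (hv j) (hv i)) (X i) (X j)
    simp only [G, pairDefect_comm s (a i j) (a j i), ← inv_div (v j) (v i)]
    linarith [mul_le_mul_of_nonneg_left h (by linarith : (0 : ℝ) ≤ s)]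
  have hoff := sum_sum_erase_nonneg_of_add_swap_nonneg G hpair
  rw [← sum_congr rfl fun i _ => hrow i, sum_sub_distrib] at hoff
  linarith

end WeightedForm

theorem rpow_sub_two_mul_rpow_mul_sq {s v : ℝ} (hv : 0 < v) (w z : ℝ) :
    v ^ (s - 2) * w ^ s * z ^ 2 = w ^ s / v ^ s * (v ^ (s - 1) * z) ^ 2 := by
  have h : v ^ (s - 2) * v ^ s = (v ^ (s - 1)) ^ 2 := by
    rw [← rpow_add hv, ← rpow_mul_natCast hv.le]
    ring_nf
  field_simp
  linear_combination w ^ s * z ^ 2 * h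

theorem rpow_sub_two_mul_self {s v : ℝ} (hv : 0 < v) : v ^ (s - 2) * v = v ^ (s - 1) := by
  rw [← rpow_add_one hv.ne']
  ring_nf

theorem matH_mul_apply {n : ℕ} (s : ℝ) (P u : Fin n → ℝ) (M : Matrix (Fin n) (Fin n) ℝ)
    (i j : Fin n) : (matH n s P u * M) i j = s * P i * u i ^ (s - 2) * M i j := by
  simp [matH, Matrix.mul_apply, ite_mul]

theorem quad_matH_mul_matA {n : ℕ} (s : ℝ) (a0 : Fin n → ℝ) (a : Fin n → Fin n → ℝ)
    {u : Fin n → ℝ} (hu : ∀ i, 0 < u i) (z : Fin n → ℝ) :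
    quad n (matH n s (fun _ => 1) u * matA n s a0 a u) z
      = s * ∑ i, a0 i * u i ^ (s - 2) * z i ^ 2
        + ∑ i, ∑ j, (s * a i j * (u j ^ s / u i ^ s) * (u i ^ (s - 1) * z i) ^ 2
          + s ^ 2 * a i j * (u i ^ (s - 1) * z i * (u j ^ (s - 1) * z j))) := by
  rw [quad, mul_sum, ← sum_add_distrib]
  refine sum_congr rfl fun i _ => ?_
  simp only [matH_mul_apply, matA, Matrix.of_apply, mul_add, add_mul, sum_add_distrib, mul_ite,
    ite_mul, mul_zero, zero_mul, sum_ite_eq, mem_univ, if_true]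
  have hdiag : ∀ k, s * a i k * (u k ^ s / u i ^ s) * (u i ^ (s - 1) * z i) ^ 2
      = z i * (s * 1 * u i ^ (s - 2) * (a i k * u k ^ s)) * z i := by
    intro k
    linear_combination s * a i k * (rpow_sub_two_mul_rpow_mul_sq (hu i) (u k) (z i)).symm
  have hcross : ∀ k, s ^ 2 * a i k * (u i ^ (s - 1) * z i * (u k ^ (s - 1) * z k))
      = z i * (s * 1 * u i ^ (s - 2) * (s * a i k * u i * u k ^ (s - 1))) * z k := by
    intro k
    rw [← rpow_sub_two_mul_self (hu i)]
    ring
  simp only [hdiag, hcross, mul_sum, sum_mul]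
  ring

theorem stmt9_general (n : ℕ) [NeZero n] (s : ℝ) (hs : 1 < s)
    (a0 : Fin n → ℝ) (a : Fin n → Fin n → ℝ)
    (ha : ∀ i j, 0 ≤ a i j)
    (η2 : ℝ)
    (hη2 : η2 = Finset.univ.inf' Finset.univ_nonempty
      (fun i => a i i - 1 / (2 * (s + 1)) * ∑ j ∈ Finset.univ.erase i,
        (s * (a i j + a j i) - 2 * Real.sqrt (a i j * a j i)))) :
    ∀ (z u : Fin n → ℝ), (∀ i, 0 < u i) →
      s * ∑ i, a0 i * u i ^ (s - 2) * z i ^ 2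
        + η2 * (s * (s + 1)) * ∑ i, u i ^ (2 * (s - 1)) * z i ^ 2
      ≤ quad n (matH n s (fun _ => 1) u * matA n s a0 a u) z := by
  intro z u hu
  have hη2_le : ∀ i, η2 ≤ rowMargin s a i := fun i => hη2 ▸ inf'_le _ (mem_univ i)
  have hsq : ∀ i, u i ^ (2 * (s - 1)) * z i ^ 2 = (u i ^ (s - 1) * z i) ^ 2 := fun i => by
    rw [mul_pow, ← rpow_mul_natCast (hu i).le]
    ring_nf
  rw [quad_matH_mul_matA s a0 a hu z]
  gcongr _ + ?_
  calc η2 * (s * (s + 1)) * ∑ i, u i ^ (2 * (s - 1)) * z i ^ 2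
      = ∑ i, η2 * (s * (s + 1)) * (u i ^ (2 * (s - 1)) * z i ^ 2) := mul_sum _ _ _
    _ ≤ ∑ i, s * (s + 1) * rowMargin s a i * (u i ^ (s - 1) * z i) ^ 2 := by
        refine sum_le_sum fun i _ => ?_
        rw [hsq, mul_comm η2]
        gcongr
        exact hη2_le i
    _ ≤ _ := sum_rowMargin_mul_sq_le hs.le ha (fun i => rpow_pos_of_pos (hu i) s) _

theorem stmt9 (n : ℕ) [NeZero n] (s : ℝ) (hs : 1 < s)
    (a0 : Fin n → ℝ) (a : Fin n → Fin n → ℝ)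
    (ha0 : ∀ i, 0 ≤ a0 i) (ha : ∀ i j, 0 ≤ a i j)
    (η2 : ℝ)
    (hη2 : η2 = Finset.univ.inf' Finset.univ_nonempty
      (fun i => a i i - 1 / (2 * (s + 1)) * ∑ j ∈ Finset.univ.erase i,
        (s * (a i j + a j i) - 2 * Real.sqrt (a i j * a j i))))
    (hpos : 0 < η2) :
    ∀ (z u : Fin n → ℝ), (∀ i, 0 < u i) →
      s * ∑ i, a0 i * u i ^ (s - 2) * z i ^ 2
        + η2 * (s * (s + 1)) * ∑ i, u i ^ (2 * (s - 1)) * z i ^ 2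
      ≤ quad n (matH n s (fun _ => 1) u * matA n s a0 a u) z :=
  stmt9_general n s hs a0 a ha η2 hη2
end
end

section
/- Let n = 3, s = 1, π_1 = π_2 = π_3 = 1, a_{13} = a_{32} = a_{21} = 1, a_{10}, a_{20}, a_{30} > 0, and all other coefficients a_{ij} = 0. Let 0 < ε < 1/2 and define u⁰ = (u₁⁰, u₂⁰, u₃⁰) on (0,1) by u₁⁰(x) = a_{20}(2a_{20} + a_{30})/(8a_{20} + 4a_{30}); u₂⁰(x) = 4a_{20} for 0 < x < 1/2, u₂⁰(x) = a_{20}(4 − ε^{-1}(x − 1/2)) for 1/2 < x < 1/2 + ε, u₂⁰(x) = 3a_{20} for 1/2 + ε < x < 1; u₃⁰(x) = 8a_{20} + 4a_{30} for 0 < x < 1/2, u₃⁰(x) = a_{20}(8 + ε^{-1}(x − 1/2)) + 4a_{30} for 1/2 < x < 1/2 + ε, u₃⁰(x) = 9a_{20} + 4a_{30} for 1/2 + ε < x < 1. Then the entropy production ∫₀¹ (∂_x u⁰(x))ᵀ H(u⁰(x)) A(u⁰(x)) (∂_x u⁰(x)) dx ≤ −a_{20}²/(12ε), where ∂_x u⁰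 denotes the (almost everywhere defined) derivative of the piecewise linear function u⁰. -/
/-!
Off the ramp `(1/2, 1/2 + ε)` the datum `u⁰` is locally constant; on it, `∂ₓu⁰ = (a20/ε)(0, -1, 1)`.
For `s = 1` and `π = 1` one has `H A = diag((a_{i0} + Σₖ a_{ik} u_k) / u_i) + (a_{ij})`, so there the
entropy density is `(a20/ε)² ((a20 + u₁)/u₂ + (a30 + u₂)/u₃ - 1)`: the off-diagonal entry `a_{32} = 1`
contributes `-(a20/ε)²`. Since `u₁ = a20/4`, `u₂ ≥ 3 a20` and `2 (a30 + u₂) ≤ u₃` on the ramp, the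
bracket is at most `5/12 + 1/2 - 1 = -1/12`, and integrating over an interval of length `ε` gives
the bound.
-/

open Finset Real

noncomputable section

open MeasureTheory

open Set Filter Topology

lemma matH_one_mul_matA {n : ℕ} (a0 : Fin n → ℝ) (a : Fin n → Fin n → ℝ) {u : Fin n → ℝ}
    (hu : ∀ i, u i ≠ 0) :
    matH n 1 (fun _ => 1) u * matA n 1 a0 a u =
      Matrix.diagonal (fun i => (a0 i + ∑ k, a i k * u k) / u i) + Matrix.of a := by
  ext i j
  simp only [Matrix.mul_apply, matH, matA, Matrix.of_apply, ite_mul, zero_mul,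
    Finset.sum_ite_eq, Finset.mem_univ, if_true, Matrix.add_apply, Matrix.diagonal_apply]
  simp only [show (1 : ℝ) - 2 = -1 by norm_num, sub_self, Real.rpow_neg_one, Real.rpow_zero,
    Real.rpow_one, one_mul, mul_one]
  rw [mul_add, mul_comm (a i j), inv_mul_cancel_left₀ (hu i)]
  split_ifs <;> ring

lemma quad_cyclic (a10 a20 a30 c : ℝ) {u : Fin 3 → ℝ} (hu : ∀ i, u i ≠ 0) :
    quad 3 (matH 3 1 (fun _ => 1) u *
        matA 3 1 ![a10, a20, a30] ![![0, 0, 1], ![1, 0, 0], ![0, 1, 0]] u) ![0, -c, c] =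
      c ^ 2 * ((a20 + u 0) / u 1 + (a30 + u 1) / u 2 - 1) := by
  rw [matH_one_mul_matA _ _ hu]
  simp only [quad, Fin.sum_univ_three, Matrix.cons_val, Matrix.add_apply, Matrix.diagonal_apply,
    Matrix.of_apply, Fin.reduceEq, ↓reduceIte]
  ring

lemma deriv_ite_lt_ite_lt {f f' : ℝ → ℝ} (α β : ℝ) {p q x : ℝ}
    (hf : ∀ y ∈ Ioo p q, HasDerivAt f (f' y) y) (hp : x ≠ p) (hq : x ≠ q) :
    deriv (fun y => if y < p then α else if y < q then f y else β) x =
      (Ioo p q).indicator f' x := by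
  rcases hp.lt_or_gt with hxp | hpx
  · have hloc : (fun y => if y < p then α else if y < q then f y else β) =ᶠ[𝓝 x]
        fun _ => α := by
      filter_upwards [Iio_mem_nhds hxp] with y hy
      rw [if_pos (show y < p from hy)]
    rw [hloc.deriv_eq, deriv_const, indicator_of_notMem fun hx => hxp.not_gt hx.1]
  rcases hq.lt_or_gt with hxq | hqx
  · have hloc : (fun y => if y < p then α else if y < q then f y else β) =ᶠ[𝓝 x] f := by
      filter_upwards [Ioo_mem_nhds hpx hxq] with y hy
      rw [if_neg hy.1.not_gt, if_pos hy.2]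
    have hmem : x ∈ Ioo p q := ⟨hpx, hxq⟩
    rw [hloc.deriv_eq, (hf x hmem).deriv, indicator_of_mem hmem]
  · have hloc : (fun y => if y < p then α else if y < q then f y else β) =ᶠ[𝓝 x]
        fun _ => β := by
      filter_upwards [Ioi_mem_nhds hpx, Ioi_mem_nhds hqx] with y hyp hyq
      rw [if_neg (not_lt.2 (le_of_lt hyp)), if_neg (not_lt.2 (le_of_lt hyq))]
    rw [hloc.deriv_eq, deriv_const, indicator_of_notMem fun hx => hqx.not_gt hx.2]

lemma setIntegral_Ioo_le_of_le {g : ℝ → ℝ} {a b C : ℝ} (hab : a ≤ b)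
    (hg : IntegrableOn g (Ioo a b)) (hC : ∀ x ∈ Ioo a b, g x ≤ C) :
    ∫ x in Ioo a b, g x ≤ C * (b - a) := by
  calc ∫ x in Ioo a b, g x ≤ ∫ _ in Ioo a b, C :=
        setIntegral_mono_on hg (integrableOn_const measure_Ioo_lt_top.ne) measurableSet_Ioo hC
    _ = C * (b - a) := by
      rw [setIntegral_const, Real.volume_real_Ioo_of_le hab, smul_eq_mul, mul_comm]

lemma inv_mul_sub_mem_Icc {ε p x : ℝ} (hε : 0 < ε) (hx : x ∈ Icc p (p + ε)) :
    ε⁻¹ * (x - p) ∈ Icc (0 : ℝ) 1 :=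
  ⟨mul_nonneg (inv_nonneg.2 hε.le) (sub_nonneg.2 hx.1),
    (inv_mul_le_one₀ hε).2 (by linarith [hx.2])⟩

def rampDatum (a20 a30 ε : ℝ) (x : ℝ) : Fin 3 → ℝ := ![
  a20 * (2 * a20 + a30) / (8 * a20 + 4 * a30),
  if x < 1 / 2 then 4 * a20
    else if x < 1 / 2 + ε then a20 * (4 - ε⁻¹ * (x - 1 / 2)) else 3 * a20,
  if x < 1 / 2 then 8 * a20 + 4 * a30
    else if x < 1 / 2 + ε then a20 * (8 + ε⁻¹ * (x - 1 / 2)) + 4 * a30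
    else 9 * a20 + 4 * a30]

/-- On the ramp, with `t = ε⁻¹ (x - 1/2)`, the entropy density is `(a20/ε)² * rampRatio a20 a30 t`. -/
def rampRatio (a20 a30 t : ℝ) : ℝ :=
  (a20 + a20 * (2 * a20 + a30) / (8 * a20 + 4 * a30)) / (a20 * (4 - t))
    + (a30 + a20 * (4 - t)) / (a20 * (8 + t) + 4 * a30) - 1

section Ramp

variable {a20 a30 : ℝ}

lemma rampValues_pos (ha20 : 0 < a20) (ha30 : 0 < a30) {t : ℝ} (ht : t ∈ Icc (0 : ℝ) 1) :
    0 < a20 * (4 - t) ∧ 0 < a20 * (8 + t) + 4 * a30 := by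
  obtain ⟨ht0, ht1⟩ := ht
  constructor <;> nlinarith

lemma rampRatio_le (ha20 : 0 < a20) (ha30 : 0 < a30) {t : ℝ} (ht : t ∈ Icc (0 : ℝ) 1) :
    rampRatio a20 a30 t ≤ -(1 / 12) := by
  obtain ⟨hu₂, hu₃⟩ := rampValues_pos ha20 ha30 ht
  obtain ⟨ht0, ht1⟩ := ht
  have hu₁ : a20 + a20 * (2 * a20 + a30) / (8 * a20 + 4 * a30) = 5 * a20 / 4 := by
    field_simp
    ring
  have h₂ : 5 * a20 / 4 / (a20 * (4 - t)) ≤ 5 / 12 := by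
    rw [div_le_div_iff₀ hu₂ (by norm_num)]
    nlinarith
  have h₃ : (a30 + a20 * (4 - t)) / (a20 * (8 + t) + 4 * a30) ≤ 1 / 2 := by
    rw [div_le_div_iff₀ hu₃ (by norm_num)]
    nlinarith
  rw [rampRatio, hu₁]
  linarith

lemma continuousOn_rampRatio (ha20 : 0 < a20) (ha30 : 0 < a30) :
    ContinuousOn (rampRatio a20 a30) (Icc 0 1) := by
  refine ((ContinuousOn.div (by fun_prop) (by fun_prop) fun t ht => ?_).add
    (ContinuousOn.div (by fun_prop) (by fun_prop) fun t ht => ?_)).sub continuousOn_const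
  · exact (rampValues_pos ha20 ha30 ht).1.ne'
  · exact (rampValues_pos ha20 ha30 ht).2.ne'

end Ramp

lemma deriv_rampDatum {a20 a30 ε x : ℝ} (hx : x ∉ ({1 / 2, 1 / 2 + ε} : Set ℝ)) :
    (fun i => deriv (fun y => rampDatum a20 a30 ε y i) x) =
      (Ioo (1 / 2) (1 / 2 + ε)).indicator (fun _ => ![0, -(a20 / ε), a20 / ε]) x := by
  simp only [mem_insert_iff, mem_singleton_iff, not_or] at hx
  have h₁ := deriv_ite_lt_ite_lt (4 * a20) (3 * a20) (f' := fun _ => -(a20 / ε))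
    (fun y _ => (((((hasDerivAt_id' y).sub_const (1 / 2)).const_mul ε⁻¹).const_sub 4).const_mul
      a20).congr_deriv (by ring)) hx.1 hx.2
  have h₂ := deriv_ite_lt_ite_lt (8 * a20 + 4 * a30) (9 * a20 + 4 * a30) (f' := fun _ => a20 / ε)
    (fun y _ => ((((((hasDerivAt_id' y).sub_const (1 / 2)).const_mul ε⁻¹).const_add 8).const_mul
      a20).add_const (4 * a30)).congr_deriv (by ring)) hx.1 hx.2
  funext i
  by_cases hmem : x ∈ Ioo (1 / 2) (1 / 2 + ε)
  · simp only [indicator_of_mem hmem] at h₁ h₂ ⊢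
    fin_cases i <;> simp only [rampDatum, Fin.zero_eta, Fin.mk_one, Fin.reduceFinMk,
      Matrix.cons_val, deriv_const', h₁, h₂]
  · simp only [indicator_of_notMem hmem] at h₁ h₂ ⊢
    fin_cases i <;> simp only [rampDatum, Fin.zero_eta, Fin.mk_one, Fin.reduceFinMk,
      Matrix.cons_val, deriv_const', Pi.zero_apply, h₁, h₂]

lemma entropyDensity_rampDatum {a10 a20 a30 ε x : ℝ} (ha20 : 0 < a20) (ha30 : 0 < a30)
    (hε : 0 < ε) (hx : x ∉ ({1 / 2, 1 / 2 + ε} : Set ℝ)) :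
    quad 3 (matH 3 1 (fun _ => 1) (rampDatum a20 a30 ε x) *
        matA 3 1 ![a10, a20, a30] ![![0, 0, 1], ![1, 0, 0], ![0, 1, 0]] (rampDatum a20 a30 ε x))
        (fun i => deriv (fun y => rampDatum a20 a30 ε y i) x) =
      (Ioo (1 / 2) (1 / 2 + ε)).indicator
        (fun x => (a20 / ε) ^ 2 * rampRatio a20 a30 (ε⁻¹ * (x - 1 / 2))) x := by
  rw [deriv_rampDatum hx]
  by_cases hmem : x ∈ Ioo (1 / 2) (1 / 2 + ε)
  · obtain ⟨hu₂, hu₃⟩ :=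
      rampValues_pos ha20 ha30 (inv_mul_sub_mem_Icc hε (Ioo_subset_Icc_self hmem))
    have hU : rampDatum a20 a30 ε x = ![a20 * (2 * a20 + a30) / (8 * a20 + 4 * a30),
        a20 * (4 - ε⁻¹ * (x - 1 / 2)), a20 * (8 + ε⁻¹ * (x - 1 / 2)) + 4 * a30] := by
      simp only [rampDatum, if_neg hmem.1.not_gt, if_pos hmem.2]
    have hu : ∀ i, rampDatum a20 a30 ε x i ≠ 0 := by
      rw [hU]
      intro i
      fin_cases i
      · show a20 * (2 * a20 + a30) / (8 * a20 + 4 * a30) ≠ 0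
        positivity
      · exact hu₂.ne'
      · exact hu₃.ne'
    rw [indicator_of_mem hmem, indicator_of_mem hmem, quad_cyclic _ _ _ _ hu, hU]
    rfl
  · rw [indicator_of_notMem hmem, indicator_of_notMem hmem]
    simp [quad]

theorem stmt17_general (ε : ℝ) (hε : 0 < ε) (hε2 : ε < 1 / 2)
    (a10 a20 a30 : ℝ) (ha20 : 0 < a20) (ha30 : 0 < a30)
    (a : Fin 3 → Fin 3 → ℝ) (ha : a = ![![0, 0, 1], ![1, 0, 0], ![0, 1, 0]])
    (a0 : Fin 3 → ℝ) (ha0 : a0 = ![a10, a20, a30])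
    (U : ℝ → Fin 3 → ℝ)
    (hU : U = fun x => ![
      a20 * (2 * a20 + a30) / (8 * a20 + 4 * a30),
      if x < 1 / 2 then 4 * a20
        else if x < 1 / 2 + ε then a20 * (4 - ε⁻¹ * (x - 1 / 2)) else 3 * a20,
      if x < 1 / 2 then 8 * a20 + 4 * a30
        else if x < 1 / 2 + ε then a20 * (8 + ε⁻¹ * (x - 1 / 2)) + 4 * a30
        else 9 * a20 + 4 * a30]) :
    ∫ x in Set.Ioo (0 : ℝ) 1,
        ∑ i, ∑ j, deriv (fun y => U y i) x
          * (matH 3 1 (fun _ => 1) (U x) * matA 3 1 a0 a (U x)) i j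
          * deriv (fun y => U y j) x
      ≤ -(a20 ^ 2 / (12 * ε)) := by
  subst ha ha0
  obtain rfl : U = rampDatum a20 a30 ε := hU
  set g : ℝ → ℝ := fun x => (a20 / ε) ^ 2 * rampRatio a20 a30 (ε⁻¹ * (x - 1 / 2))
  have hramp : Ioo (1 / 2 : ℝ) (1 / 2 + ε) ⊆ Ioo 0 1 := Ioo_subset_Ioo (by norm_num) (by linarith)
  have hg : IntegrableOn g (Ioo (1 / 2) (1 / 2 + ε)) :=
    (continuousOn_const.mul ((continuousOn_rampRatio ha20 ha30).comp (by fun_prop)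
      fun x hx => inv_mul_sub_mem_Icc hε hx)).integrableOn_Icc.mono_set Ioo_subset_Icc_self
  calc _ = ∫ x in Ioo (0 : ℝ) 1, (Ioo (1 / 2) (1 / 2 + ε)).indicator g x := by
        refine integral_congr_ae (ae_restrict_of_ae ?_)
        filter_upwards [(to_countable {1 / 2, 1 / 2 + ε}).ae_notMem volume] with x hx
        exact entropyDensity_rampDatum ha20 ha30 hε hx
    _ = ∫ x in Ioo (1 / 2) (1 / 2 + ε), g x := by
        rw [setIntegral_indicator measurableSet_Ioo, inter_eq_right.2 hramp]
    _ ≤ (a20 / ε) ^ 2 * -(1 / 12) * (1 / 2 + ε - 1 / 2) :=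
        setIntegral_Ioo_le_of_le (by linarith) hg fun x hx => mul_le_mul_of_nonneg_left
          (rampRatio_le ha20 ha30 (inv_mul_sub_mem_Icc hε (Ioo_subset_Icc_self hx))) (sq_nonneg _)
    _ = -(a20 ^ 2 / (12 * ε)) := by
        field_simp
        ring

theorem stmt17 (ε : ℝ) (hε : 0 < ε) (hε2 : ε < 1 / 2)
    (a10 a20 a30 : ℝ) (ha10 : 0 < a10) (ha20 : 0 < a20) (ha30 : 0 < a30)
    (a : Fin 3 → Fin 3 → ℝ) (ha : a = ![![0, 0, 1], ![1, 0, 0], ![0, 1, 0]])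
    (a0 : Fin 3 → ℝ) (ha0 : a0 = ![a10, a20, a30])
    (U : ℝ → Fin 3 → ℝ)
    (hU : U = fun x => ![
      a20 * (2 * a20 + a30) / (8 * a20 + 4 * a30),
      if x < 1 / 2 then 4 * a20
        else if x < 1 / 2 + ε then a20 * (4 - ε⁻¹ * (x - 1 / 2)) else 3 * a20,
      if x < 1 / 2 then 8 * a20 + 4 * a30
        else if x < 1 / 2 + ε then a20 * (8 + ε⁻¹ * (x - 1 / 2)) + 4 * a30
        else 9 * a20 + 4 * a30]) :
    ∫ x in Set.Ioo (0 : ℝ) 1,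
        ∑ i, ∑ j, deriv (fun y => U y i) x
          * (matH 3 1 (fun _ => 1) (U x) * matA 3 1 a0 a (U x)) i j
          * deriv (fun y => U y j) x
      ≤ -(a20 ^ 2 / (12 * ε)) :=
  stmt17_general ε hε hε2 a10 a20 a30 ha20 ha30 a ha a0 ha0 U hU
end
end
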